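/- Let δ ∈ (0, 1/4). Let e₁, e₂ be i.i.d. with distribution Ber(1/2 − √δ) and let b ∼ Ber(1/2) be independent of (e₁, e₂), all 𝔽₂-valued. Then the distribution p of the random vector Z = (e₁ + b, e₂ + b) ∈ 𝔽₂² (sums in 𝔽₂) is a 2δ-Santha-Vazirani source; in particular Pr[Z₁ = 1] = 1/2 and Pr[Z₂ = 1 | Z₁ = z₁] ∈ [1/2 − 2δ, 1/2 + 2δ] for each z₁ ∈ 𝔽₂. -/
import Mathlib


/-- Bernoulli distribution on `𝔽₂`, taking value `1` with probability `α`. -/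
noncomputable def bern (α : ℝ) : ZMod 2 → ℝ := fun z => if z = 1 then α else 1 - α

/-- Pushforward of a mass function on a finite type along a map. -/
noncomputable def pushforward {X Y : Type*} [Fintype X] [DecidableEq Y]
    (f : X → Y) (p : X → ℝ) : Y → ℝ :=
  fun y => ∑ x ∈ Finset.univ.filter (fun x => f x = y), p x

/-- `p` is a `δ`-Santha–Vazirani source: for every `i` and every conditioning of the
preceding bits, the conditional probability that the `i`-th bit is `1` lies in
`[1/2 − δ, 1/2 + δ]` (stated multiplicatively to avoid division by zero). -/
def IsSVSource {k : ℕ} (δ : ℝ) (p : (Fin k → ZMod 2) → ℝ) : Prop :=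
  ∀ (i : Fin k) (x : Fin k → ZMod 2),
    (1 / 2 - δ) * (∑ z ∈ Finset.univ.filter (fun z : Fin k → ZMod 2 => ∀ j, j < i → z j = x j), p z)
      ≤ (∑ z ∈ Finset.univ.filter
          (fun z : Fin k → ZMod 2 => z i = 1 ∧ ∀ j, j < i → z j = x j), p z) ∧
    (∑ z ∈ Finset.univ.filter
          (fun z : Fin k → ZMod 2 => z i = 1 ∧ ∀ j, j < i → z j = x j), p z)
      ≤ (1 / 2 + δ) *
        (∑ z ∈ Finset.univ.filter (fun z : Fin k → ZMod 2 => ∀ j, j < i → z j = x j), p z)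

/-- The law of `Z = (e₁ + b, e₂ + b) ∈ 𝔽₂²`, where `e₁, e₂` are i.i.d.
`Ber(1/2 − √δ)` and `b ∼ Ber(1/2)` is independent of `(e₁, e₂)`. -/
noncomputable def pdist (δ : ℝ) : (Fin 2 → ZMod 2) → ℝ :=
  pushforward (fun w : ZMod 2 × ZMod 2 × ZMod 2 => ![w.1 + w.2.2, w.2.1 + w.2.2])
    (fun w => bern (1 / 2 - Real.sqrt δ) w.1 * bern (1 / 2 - Real.sqrt δ) w.2.1
      * bern (1 / 2) w.2.2)

lemma sum_pushforward {X Y : Type*} [Fintype X] [Fintype Y] [DecidableEq Y]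
    (f : X → Y) (p : X → ℝ) (P : Y → Prop) [DecidablePred P] :
    ∑ y ∈ Finset.univ.filter P, pushforward f p y
      = ∑ x ∈ Finset.univ.filter (fun x => P (f x)), p x := by
  simp only [pushforward]
  rw [Finset.sum_fiberwise_eq_sum_filter]
  refine Finset.sum_congr ?_ fun _ _ => rfl
  ext x
  simp

lemma sum_pdist (δ : ℝ) (P : (Fin 2 → ZMod 2) → Prop) [DecidablePred P] :
    ∑ z ∈ Finset.univ.filter P, pdist δ z =
      (if P ![0,0] then 1/4 + Real.sqrt δ * Real.sqrt δ else 0)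
    + (if P ![0,1] then 1/4 - Real.sqrt δ * Real.sqrt δ else 0)
    + (if P ![1,0] then 1/4 - Real.sqrt δ * Real.sqrt δ else 0)
    + (if P ![1,1] then 1/4 + Real.sqrt δ * Real.sqrt δ else 0) := by
  rw [pdist, sum_pushforward]
  have huniv : (Finset.univ : Finset (ZMod 2 × ZMod 2 × ZMod 2)) =
      ({0,1} : Finset (ZMod 2)) ×ˢ (({0,1} : Finset (ZMod 2)) ×ˢ ({0,1} : Finset (ZMod 2))) := rfl
  have h01 : ((0:ZMod 2)) ∉ ({1} : Finset (ZMod 2)) := by decide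
  rw [Finset.sum_filter, huniv]
  simp only [Finset.sum_product, Finset.sum_insert h01, Finset.sum_singleton, bern,
    show ((0:ZMod 2)+0 = 0) from rfl, show ((0:ZMod 2)+1 = 1) from rfl,
    show ((1:ZMod 2)+0 = 1) from rfl, show ((1:ZMod 2)+1 = 0) from rfl,
    show (((0:ZMod 2) = 1) ↔ False) from by decide,
    show (((1:ZMod 2) = 1) ↔ True) from by decide,
    if_true, if_false]
  split_ifs <;> ring

/-- The law `p` of `Z = (e₁ + b, e₂ + b)` is a `2δ`-Santha–Vazirani source; in
particular `Pr[Z₁ = 1] = 1/2` and `Pr[Z₂ = 1 | Z₁ = z₁] ∈ [1/2 − 2δ, 1/2 + 2δ]`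
for each `z₁ ∈ 𝔽₂` (the latter stated multiplicatively). -/
theorem pdist_isSVSource (δ : ℝ) (hδ0 : 0 < δ) (hδ1 : δ < 1 / 4) :
    IsSVSource (2 * δ) (pdist δ) ∧
    (∑ z ∈ Finset.univ.filter (fun z : Fin 2 → ZMod 2 => z 0 = 1), pdist δ z = 1 / 2) ∧
    ∀ z₁ : ZMod 2,
      (1 / 2 - 2 * δ) * (∑ z ∈ Finset.univ.filter (fun z : Fin 2 → ZMod 2 => z 0 = z₁), pdist δ z)
        ≤ (∑ z ∈ Finset.univ.filter (fun z : Fin 2 → ZMod 2 => z 1 = 1 ∧ z 0 = z₁), pdist δ z) ∧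
      (∑ z ∈ Finset.univ.filter (fun z : Fin 2 → ZMod 2 => z 1 = 1 ∧ z 0 = z₁), pdist δ z)
        ≤ (1 / 2 + 2 * δ) *
          (∑ z ∈ Finset.univ.filter (fun z : Fin 2 → ZMod 2 => z 0 = z₁), pdist δ z) := by
  have hss : Real.sqrt δ * Real.sqrt δ = δ := Real.mul_self_sqrt hδ0.le
  have key : ∀ (P : (Fin 2 → ZMod 2) → Prop) (hP : DecidablePred P),
      ∑ z ∈ @Finset.filter _ P hP Finset.univ, pdist δ z =
        (if P ![0,0] then 1/4 + δ else 0) + (if P ![0,1] then 1/4 - δ else 0)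
      + (if P ![1,0] then 1/4 - δ else 0) + (if P ![1,1] then 1/4 + δ else 0) := by
    intro P hP
    rw [@sum_pdist δ P hP, hss]
  refine ⟨?_, ?_, ?_⟩
  · intro i x
    fin_cases i
    · rw [key _ _, key _ _]
      simp only [Matrix.cons_val_zero, Matrix.cons_val_one, Matrix.head_cons,
        show ∀ j : Fin 2, ¬ j < (⟨0, by omega⟩ : Fin 2) from by decide,
        show (((0:ZMod 2) = 1) ↔ False) from by decide,
        show (((1:ZMod 2) = 1) ↔ True) from by decide]
      norm_num
      constructor <;> nlinarith
    · rw [key _ _, key _ _]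
      simp only [Matrix.cons_val_zero, Matrix.cons_val_one, Matrix.head_cons,
        show ∀ j : Fin 2, (j < (⟨1, by omega⟩ : Fin 2)) ↔ j = 0 from by decide,
        forall_eq,
        show (((0:ZMod 2) = 1) ↔ False) from by decide,
        show (((1:ZMod 2) = 1) ↔ True) from by decide]
      rcases (show ∀ a : ZMod 2, a = 0 ∨ a = 1 by decide) (x 0) with h | h <;>
        simp only [h, show (((0:ZMod 2) = 1) ↔ False) from by decide,
          show (((1:ZMod 2) = 1) ↔ True) from by decide,
          show (((0:ZMod 2) = 0) ↔ True) from by decide,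
          show (((1:ZMod 2) = 0) ↔ False) from by decide] <;>
        norm_num <;> constructor <;> nlinarith
  · rw [key _ _]
    simp only [Matrix.cons_val_zero,
      show (((0:ZMod 2) = 1) ↔ False) from by decide,
      show (((1:ZMod 2) = 1) ↔ True) from by decide]
    norm_num
  · intro z₁
    rw [key _ _, key _ _]
    rcases (show ∀ a : ZMod 2, a = 0 ∨ a = 1 by decide) z₁ with h | h <;>
      simp only [h, Matrix.cons_val_zero, Matrix.cons_val_one, Matrix.head_cons,
        show (((0:ZMod 2) = 1) ↔ False) from by decide,
        show (((1:ZMod 2) = 1) ↔ True) from by decide,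
        show (((0:ZMod 2) = 0) ↔ True) from by decide,
        show (((1:ZMod 2) = 0) ↔ False) from by decide] <;>
      norm_num <;> constructor <;> nlinarith
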